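/- Let G be a nontrivial finitely generated group admitting a bi-invariant linear order. Then G is not a simple group. -/

import Mathlib

/-!
If `G` is generated by a finite set `S` and `g` bounds every `|s|ₘ`, `s ∈ S`, then every element of
`G` is bounded in absolute value by a power of `g`. The elements `x` with `|x|ₘ ^ n < g` for all `n`
form a subgroup that misses `g`; it is normal, because conjugating by an element bounded by `g ^ k`
cannot push such an element above `g`. In a simple group it is therefore trivial, i.e. the order is
Archimedean, and then `G` is commutative by Hölder's theorem. But a commutative simple group is
finite, whereas a bi-ordered group is torsion-free.
-/

section BiorderedGroup

attribute [local instance] mulLeftMono_of_mulLeftStrictMono mulRightMono_of_mulRightStrictMono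

variable {G : Type*} [Group G] [LinearOrder G] [MulLeftStrictMono G]

theorem zpow_right_strictMono' {a : G} (ha : 1 < a) : StrictMono fun n : ℤ ↦ a ^ n :=
  strictMono_int_of_lt_succ fun n ↦ by
    rw [zpow_add_one]
    exact lt_mul_of_one_lt_right' _ ha

variable [MulRightStrictMono G]

theorem exists_one_lt_sq_le {δ c : G} (hδ : 1 < δ) (hδc : δ < c) : ∃ ε, 1 < ε ∧ ε ^ 2 ≤ c := by
  refine ⟨min δ (δ⁻¹ * c), lt_min hδ (lt_inv_mul_iff_mul_lt.mpr (by rwa [mul_one])), ?_⟩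
  calc min δ (δ⁻¹ * c) ^ 2 = min δ (δ⁻¹ * c) * min δ (δ⁻¹ * c) := sq _
    _ ≤ δ * (δ⁻¹ * c) := mul_le_mul' (min_le_left _ _) (min_le_right _ _)
    _ = c := mul_inv_cancel_left δ c

theorem mabs_conj (h x : G) : |h * x * h⁻¹|ₘ = h * |x|ₘ * h⁻¹ := by
  rw [mabs_eq_max_inv, mabs_eq_max_inv, ← max_mul_mul_left, ← max_mul_mul_right]
  group

variable (G) in
/-- `MulArchimedean` without commutativity, which Mathlib's class presupposes. -/
def IsMulArchimedean : Prop :=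
  ∀ (x : G) {y : G}, 1 < y → ∃ n : ℕ, x ≤ y ^ n

namespace IsMulArchimedean

theorem exists_zpow_le_lt (hG : IsMulArchimedean G) {δ : G} (hδ : 1 < δ) (a : G) :
    ∃ p : ℤ, δ ^ p ≤ a ∧ a < δ ^ (p + 1) := by
  have hmono := zpow_right_strictMono' hδ
  obtain ⟨n, hn⟩ := hG a hδ
  obtain ⟨m, hm⟩ := hG a⁻¹ hδ
  obtain ⟨p, hp, hmax⟩ := Int.exists_greatest_of_bdd (P := fun k : ℤ ↦ δ ^ k ≤ a)
    ⟨n, fun k hk ↦ hmono.le_iff_le.mp (hk.trans (by simpa using hn))⟩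
    ⟨-m, by simpa using inv_le'.mp hm⟩
  exact ⟨p, hp, lt_of_not_ge fun h ↦ by linarith [hmax (p + 1) h]⟩

theorem mul_lt_mul_swap_mul_sq (hG : IsMulArchimedean G) {δ : G} (hδ : 1 < δ) (a b : G) :
    a * b < b * a * δ ^ 2 := by
  obtain ⟨p, hpa, hap⟩ := hG.exists_zpow_le_lt hδ a
  obtain ⟨q, hqb, hbq⟩ := hG.exists_zpow_le_lt hδ b
  calc a * b < δ ^ (p + 1) * δ ^ (q + 1) := mul_lt_mul_of_lt_of_lt hap hbq
    _ = δ ^ q * δ ^ p * δ ^ 2 := by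
      rw [← zpow_natCast, ← zpow_add, ← zpow_add, ← zpow_add]
      congr 1
      push_cast
      ring
    _ ≤ b * a * δ ^ 2 := by gcongr

theorem mem_zpowers_of_isLeast (hG : IsMulArchimedean G) {c : G} (hc : IsLeast {x | 1 < x} c)
    (x : G) :
    x ∈ Subgroup.zpowers c := by
  obtain ⟨p, hpx, hxp⟩ := hG.exists_zpow_le_lt hc.1 x
  have h1 : 1 ≤ (c ^ p)⁻¹ * x := le_inv_mul_iff_mul_le.mpr (by rwa [mul_one])
  have h2 : (c ^ p)⁻¹ * x < c := inv_mul_lt_iff_lt_mul.mpr (by rwa [← zpow_add_one])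
  have h3 : (c ^ p)⁻¹ * x = 1 := h1.eq_of_not_lt' fun h ↦ (hc.2 h).not_gt h2
  exact ⟨p, inv_mul_eq_one.mp h3⟩

theorem mul_le_mul_swap (hG : IsMulArchimedean G) (hdense : ∀ c : G, 1 < c → ∃ δ, 1 < δ ∧ δ < c)
    (a b : G) : a * b ≤ b * a := by
  by_contra! hlt
  obtain ⟨δ, hδ, hδc⟩ :=
    hdense ((b * a)⁻¹ * (a * b)) (lt_inv_mul_iff_mul_lt.mpr (by rwa [mul_one]))
  obtain ⟨ε, hε, hεc⟩ := exists_one_lt_sq_le hδ hδc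
  have := calc a * b < b * a * ε ^ 2 := hG.mul_lt_mul_swap_mul_sq hε a b
    _ ≤ b * a * ((b * a)⁻¹ * (a * b)) := by gcongr
    _ = a * b := mul_inv_cancel_left _ _
  exact this.false

/-- Hölder's theorem. -/
theorem isMulCommutative (hG : IsMulArchimedean G) : IsMulCommutative G := by
  by_cases hdense : ∀ c : G, 1 < c → ∃ δ, 1 < δ ∧ δ < c
  · exact ⟨⟨fun a b ↦ (hG.mul_le_mul_swap hdense a b).antisymm (hG.mul_le_mul_swap hdense b a)⟩⟩
  · push Not at hdense
    obtain ⟨c, hc, hmin⟩ := hdense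
    refine ⟨⟨fun a b ↦ ?_⟩⟩
    obtain ⟨m, rfl⟩ := hG.mem_zpowers_of_isLeast ⟨hc, hmin⟩ a
    obtain ⟨n, rfl⟩ := hG.mem_zpowers_of_isLeast ⟨hc, hmin⟩ b
    exact Commute.zpow_zpow_self c m n

end IsMulArchimedean

def boundedSubgroup (g : G) : Subgroup G where
  carrier := {x | ∃ n : ℕ, |x|ₘ ≤ g ^ n}
  one_mem' := ⟨0, by simp⟩
  inv_mem' := by simp
  mul_mem' := by
    rintro x y ⟨m, hm⟩ ⟨n, hn⟩
    refine ⟨m + n, mabs_le'.mpr ⟨?_, ?_⟩⟩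
    · calc x * y ≤ |x|ₘ * |y|ₘ := mul_le_mul' (le_mabs_self x) (le_mabs_self y)
        _ ≤ g ^ m * g ^ n := mul_le_mul' hm hn
        _ = g ^ (m + n) := (pow_add g m n).symm
    · calc (x * y)⁻¹ = y⁻¹ * x⁻¹ := mul_inv_rev x y
        _ ≤ |y|ₘ * |x|ₘ := mul_le_mul' (inv_le_mabs y) (inv_le_mabs x)
        _ ≤ g ^ n * g ^ m := mul_le_mul' hn hm
        _ = g ^ (m + n) := by rw [← pow_add, add_comm]

theorem exists_boundedSubgroup_eq_top (hfg : Group.FG G) : ∃ g : G, boundedSubgroup g = ⊤ := by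
  obtain ⟨S, hS⟩ := Group.fg_def.mp hfg
  obtain ⟨g, hg⟩ := (S.image mabs).exists_le
  refine ⟨g, top_le_iff.mp (hS ▸ (Subgroup.closure_le _).mpr fun s hs ↦ ⟨1, ?_⟩)⟩
  simpa using hg _ (Finset.mem_image_of_mem _ hs)

theorem one_lt_of_boundedSubgroup_eq_top [Nontrivial G] {g : G} (hg : boundedSubgroup g = ⊤) :
    1 < g := by
  obtain ⟨x, hx⟩ := exists_ne (1 : G)
  obtain ⟨n, hn⟩ : x ∈ boundedSubgroup g := hg ▸ Subgroup.mem_top x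
  by_contra! hg1
  exact hx (mabs_le_one.mp (hn.trans (pow_le_one' hg1 n)))

def infinitesimalSubgroup (g : G) (hg : 1 < g) : Subgroup G where
  carrier := {x | ∀ n : ℕ, |x|ₘ ^ n < g}
  one_mem' := by simpa using hg
  inv_mem' := by simp
  mul_mem' := by
    intro x y hx hy n
    have hxy : |x * y|ₘ ≤ max |x|ₘ |y|ₘ ^ 2 := by
      rw [sq, mabs_le', mul_inv_rev]
      exact ⟨mul_le_mul' ((le_mabs_self x).trans (le_max_left _ _))
          ((le_mabs_self y).trans (le_max_right _ _)),
        mul_le_mul' ((inv_le_mabs y).trans (le_max_right _ _))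
          ((inv_le_mabs x).trans (le_max_left _ _))⟩
    calc |x * y|ₘ ^ n ≤ max |x|ₘ |y|ₘ ^ (2 * n) := by
          rw [pow_mul]; exact pow_le_pow_left' hxy n
      _ < g := by rcases max_choice |x|ₘ |y|ₘ with h | h <;> rw [h] <;> [exact hx _; exact hy _]

theorem mem_infinitesimalSubgroup {g x : G} (hg : 1 < g) :
    x ∈ infinitesimalSubgroup g hg ↔ ∀ n : ℕ, |x|ₘ ^ n < g :=
  Iff.rfl

theorem self_notMem_infinitesimalSubgroup {g : G} (hg : 1 < g) : g ∉ infinitesimalSubgroup g hg :=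
  fun h ↦ (h 1).ne (by rw [pow_one, mabs_of_one_lt hg])

theorem conj_lt_of_forall_pow_lt {g a h : G} {k : ℕ} (ha : ∀ m : ℕ, a ^ m < g)
    (hh : |h|ₘ ≤ g ^ k) : h * a * h⁻¹ < g := by
  by_contra! hle
  have := calc g ^ (2 * k + 1) ≤ (h * a * h⁻¹) ^ (2 * k + 1) := pow_le_pow_left' hle _
    _ = h * a ^ (2 * k + 1) * h⁻¹ := conj_pow
    _ < h * g * h⁻¹ := by gcongr; exact ha _
    _ ≤ g ^ k * g * g ^ k := by gcongr <;> [exact (le_mabs_self h).trans hh;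
        exact (inv_le_mabs h).trans hh]
    _ = g ^ (2 * k + 1) := by rw [← pow_succ, ← pow_add]; ring_nf
  exact this.false

theorem infinitesimalSubgroup_normal {g : G} (hg : 1 < g) (hdom : boundedSubgroup g = ⊤) :
    (infinitesimalSubgroup g hg).Normal where
  conj_mem x hx h n := by
    obtain ⟨k, hk⟩ : h ∈ boundedSubgroup g := hdom ▸ Subgroup.mem_top h
    rw [mabs_conj, conj_pow]
    exact conj_lt_of_forall_pow_lt (fun m ↦ by rw [← pow_mul]; exact hx _) hk

theorem isMulArchimedean_of_infinitesimalSubgroup_eq_bot {g : G} (hg : 1 < g)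
    (hdom : boundedSubgroup g = ⊤) (hbot : infinitesimalSubgroup g hg = ⊥) :
    IsMulArchimedean G := by
  intro x y hy
  obtain ⟨k, hk⟩ : x ∈ boundedSubgroup g := hdom ▸ Subgroup.mem_top x
  have hy' : y ∉ infinitesimalSubgroup g hg := by rw [hbot, Subgroup.mem_bot]; exact hy.ne'
  obtain ⟨n, hn⟩ : ∃ n : ℕ, g ≤ y ^ n := by
    simpa [mem_infinitesimalSubgroup, mabs_of_one_lt hy] using hy'
  refine ⟨n * k, ?_⟩
  calc x ≤ |x|ₘ := le_mabs_self x
    _ ≤ g ^ k := hk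
    _ ≤ (y ^ n) ^ k := pow_le_pow_left' hn k
    _ = y ^ (n * k) := (pow_mul y n k).symm

end BiorderedGroup

theorem not_isSimpleGroup_of_isMulTorsionFree {G : Type*} [Group G] [IsMulCommutative G]
    [IsMulTorsionFree G] : ¬ IsSimpleGroup G := by
  intro hsimple
  have : Finite G := Nat.finite_of_card_ne_zero (Group.is_simple_iff_prime_card.mp hsimple).ne_zero
  obtain ⟨g, hg⟩ := exists_ne (1 : G)
  exact not_isOfFinOrder_of_isMulTorsionFree hg (isOfFinOrder_of_finite g)

theorem biordered_fg_not_simple_general {G : Type*} [Group G] [LinearOrder G]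
    [MulLeftStrictMono G] [MulRightStrictMono G]
    (hfg : Group.FG G) : ¬ IsSimpleGroup G := by
  intro hsimple
  obtain ⟨g, hdom⟩ := exists_boundedSubgroup_eq_top hfg
  have hg : 1 < g := one_lt_of_boundedSubgroup_eq_top hdom
  rcases hsimple.eq_bot_or_eq_top_of_normal _ (infinitesimalSubgroup_normal hg hdom) with
    hbot | htop
  · have := (isMulArchimedean_of_infinitesimalSubgroup_eq_bot hg hdom hbot).isMulCommutative
    exact not_isSimpleGroup_of_isMulTorsionFree hsimple
  · exact self_notMem_infinitesimalSubgroup hg (htop ▸ Subgroup.mem_top g)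

/-- A nontrivial finitely generated group admitting a bi-invariant linear order
is not simple. -/
theorem biordered_fg_not_simple {G : Type*} [Group G] [Nontrivial G] [LinearOrder G]
    [MulLeftStrictMono G] [MulRightStrictMono G]
    (hfg : Group.FG G) : ¬ IsSimpleGroup G :=
  biordered_fg_not_simple_general hfg
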